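/- Let K = ℓ²(ℕ) (indexed from n = 1) with standard orthonormal basis (e_n)_n, and put H = K ⊕ K. Let A be the weighted shift operator A = ∑_n (1/n) e_{n+1} ⊗ e_n, i.e. (Ax)₁ = 0 and (Ax)_{n+1} = x_n/n, and let B be the diagonal operator with diagonals (1/n)_n, i.e. (Bx)_n = x_n/n. Then the systems (H; K ⊕ 0, graph(A)) and (H; K ⊕ 0, graph(B)) are not boundedly isomorphic. -/

import Mathlib

/-!
The sum `E ⊔ graph T` with `E = K ⊕ 0` is `K ⊕ ran T`, and a bounded isomorphism preserves the
density of the sum of the two subspaces. Finitely supported sequences lie in the range of the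
diagonal operator, so `ran B` is dense, while every vector in `ran A` has vanishing first
coordinate, so `ran A` lies in a proper closed subspace.
-/

noncomputable section

abbrev K : Type := lp (fun _ : ℕ => ℂ) 2

/-- The graph of the weighted shift A with (Ax)₀ = 0 and (Ax)_{n+1} = xₙ/(n+1). -/
def shiftGraph : Submodule ℂ (K × K) where
  carrier := {p | p.2 0 = 0 ∧ ∀ n, p.2 (n + 1) = p.1 n / ((n : ℂ) + 1)}
  add_mem' := by
    rintro p q ⟨hp0, hp⟩ ⟨hq0, hq⟩
    refine ⟨?_, fun n => ?_⟩
    · simp [Prod.snd_add, lp.coeFn_add, hp0, hq0]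
    · simp only [Prod.snd_add, Prod.fst_add, lp.coeFn_add, Pi.add_apply, hp n, hq n]
      ring
  zero_mem' := ⟨by simp [lp.coeFn_zero], fun n => by simp [lp.coeFn_zero]⟩
  smul_mem' := by
    rintro c p ⟨hp0, hp⟩
    refine ⟨?_, fun n => ?_⟩
    · simp [Prod.smul_snd, lp.coeFn_smul, hp0]
    · simp only [Prod.smul_snd, Prod.smul_fst, lp.coeFn_smul, Pi.smul_apply, hp n,
        smul_eq_mul]
      ring

/-- The graph of the diagonal operator with diagonals (1/(n+1))ₙ. -/
def diagGraph : Submodule ℂ (K × K) where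
  carrier := {p | ∀ n, p.2 n = p.1 n / ((n : ℂ) + 1)}
  add_mem' := by
    intro p q hp hq n
    simp only [Prod.snd_add, Prod.fst_add, lp.coeFn_add, Pi.add_apply, hp n, hq n]
    ring
  zero_mem' := by
    intro n
    simp [lp.coeFn_zero]
  smul_mem' := by
    intro c p hp n
    simp only [Prod.smul_snd, Prod.smul_fst, lp.coeFn_smul, Pi.smul_apply, hp n, smul_eq_mul]
    ring

section

variable {R M N : Type*} [Semiring R] [AddCommGroup M] [Module R M] [AddCommGroup N] [Module R N]

theorem Submodule.prod_top_bot_sup (G : Submodule R (M × N)) :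
    (⊤ : Submodule R M).prod ⊥ ⊔ G = (⊤ : Submodule R M).prod (G.map (LinearMap.snd R M N)) := by
  ext ⟨x, y⟩
  simp only [Submodule.mem_sup, Submodule.mem_prod, Submodule.mem_top, Submodule.mem_bot,
    Submodule.mem_map, LinearMap.snd_apply, true_and]
  constructor
  · rintro ⟨e, he, g, hg, hsum⟩
    refine ⟨g, hg, ?_⟩
    simpa [he] using congrArg Prod.snd hsum
  · rintro ⟨g, hg, rfl⟩
    exact ⟨(x - g.1, 0), rfl, g, hg, by ext <;> simp⟩

variable [TopologicalSpace M] [TopologicalSpace N]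

theorem Submodule.dense_top_prod_iff {S : Submodule R N} :
    Dense (((⊤ : Submodule R M).prod S : Submodule R (M × N)) : Set (M × N)) ↔
      Dense (S : Set N) := by
  rw [Submodule.prod_coe, Submodule.top_coe]
  refine ⟨fun h => ?_, dense_univ.prod⟩
  simpa [Set.snd_image_prod Set.univ_nonempty] using
    Prod.snd_surjective.denseRange.dense_image continuous_snd h

theorem ContinuousLinearEquiv.dense_sup_iff (V : M ≃L[R] N) {E₁ E₂ : Submodule R M}
    {F₁ F₂ : Submodule R N} (h₁ : V '' E₁ = F₁) (h₂ : V '' E₂ = F₂) :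
    Dense ((E₁ ⊔ E₂ : Submodule R M) : Set M) ↔ Dense ((F₁ ⊔ F₂ : Submodule R N) : Set N) := by
  have hmap : ∀ {E : Submodule R M} {F : Submodule R N}, V '' E = F →
      E.map (V : M →ₗ[R] N) = F := fun h => SetLike.coe_injective (by simpa using h)
  rw [← hmap h₁, ← hmap h₂, ← Submodule.map_sup, Submodule.map_coe]
  exact V.toHomeomorph.isDenseEmbedding.dense_image.symm

end

theorem dense_map_snd_diagGraph : Dense (diagGraph.map (LinearMap.snd ℂ K K) : Set K) := by
  have hsingle : ∀ n (c : ℂ), lp.single 2 n c ∈ diagGraph.map (LinearMap.snd ℂ K K) := by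
    intro n c
    refine ⟨(lp.single 2 n (((n : ℂ) + 1) * c), lp.single 2 n c), fun m => ?_, rfl⟩
    rcases eq_or_ne m n with rfl | hmn
    · simp [field]
    · simp [hmn]
  intro y
  exact mem_closure_of_tendsto (lp.hasSum_single ENNReal.ofNat_ne_top y)
    (Filter.Eventually.of_forall fun s => Submodule.sum_mem _ fun n _ => hsingle n (y n))

theorem not_dense_map_snd_shiftGraph : ¬ Dense (shiftGraph.map (LinearMap.snd ℂ K K) : Set K) := by
  intro hS
  have hclosed : IsClosed {y : K | y 0 = 0} :=
    isClosed_eq (lp.evalCLM ℂ (fun _ : ℕ => ℂ) 2 0).continuous continuous_const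
  have hsub : closure (shiftGraph.map (LinearMap.snd ℂ K K) : Set K) ⊆ {y : K | y 0 = 0} :=
    closure_minimal (by rintro _ ⟨p, hp, rfl⟩; exact hp.1) hclosed
  have h := hsub (hS.closure_eq ▸ Set.mem_univ (lp.single 2 0 (1 : ℂ)))
  simp at h

theorem shift_and_diagonal_graphs_not_boundedly_isomorphic :
    ¬ ∃ V : (K × K) ≃L[ℂ] (K × K),
        V '' (((⊤ : Submodule ℂ K).prod (⊥ : Submodule ℂ K)) : Set (K × K)) =
          (((⊤ : Submodule ℂ K).prod (⊥ : Submodule ℂ K)) : Set (K × K)) ∧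
        V '' (shiftGraph : Set (K × K)) = (diagGraph : Set (K × K)) := by
  rintro ⟨V, hE, hG⟩
  have h := (V.dense_sup_iff hE hG).mpr
  simp only [Submodule.prod_top_bot_sup, Submodule.dense_top_prod_iff] at h
  exact not_dense_map_snd_shiftGraph (h dense_map_snd_diagGraph)

end
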